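/- arXiv:1608.07701 — 5 statements merged into one kernel-verified Lean document; each statement's English description precedes it below -/
import Mathlib

section
/- The function b(m,w) = |w|^q/(q m^{q-1}) for m>0, b(0,0)=0, and b(m,w)=+∞ otherwise, equals the supremum over all (α,β) ∈ ℝ × ℝ^4 with α + |β|^{q'}/q' ≤ 0 of α m + β·w, where 1/q + 1/q' = 1 and q > 1. In particular b is proper, convex, and lower semicontinuous. -/
open scoped BigOperators Pointwise
open Classical

noncomputable section

/-- Euclidean norm on ℝ⁴ (as functions `Fin 4 → ℝ`). -/
def nrm4 (w : Fin 4 → ℝ) : ℝ := Real.sqrt (∑ i, (w i) ^ 2)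

/-- The cost function `b(m,w) = |w|^q/(q m^{q-1})` for `m > 0`, `b(0,0) = 0`, `+∞` otherwise. -/
def bfun (q : ℝ) (m : ℝ) (w : Fin 4 → ℝ) : EReal :=
  if 0 < m then (((nrm4 w ^ q) / (q * m ^ (q - 1)) : ℝ) : EReal)
  else if m = 0 ∧ w = 0 then (0 : EReal) else ⊤

/-! For `m > 0`, `b(m, w) = m · ‖m⁻¹ w‖^q / q` is the perspective of `‖·‖^q / q`, which is the
Fenchel conjugate of `‖·‖^{q'} / q'`: Cauchy–Schwarz and Young give
`⟪β, u⟫ - ‖β‖^{q'} / q' ≤ ‖u‖^q / q`, with equality at `β = ‖u‖^{q-2} u`. Since the best `α` for a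
given `β` is `-‖β‖^{q'} / q'`, the supremum of `α m + ⟪β, w⟫` over the constraint set is `b(m, w)`.
If `m < 0`, or `m = 0 ≠ w`, the functional is unbounded on the constraint set (along `(t, 0)` with
`t → -∞`, resp. `(α, t w)` with `t → +∞`); at `(0, 0)` it vanishes. As a supremum of linear
functionals, `b` is convex and lower semicontinuous. -/

open scoped RealInnerProductSpace

theorem EReal.biSup_coe_eq_top_of_forall_exists_le {ι : Type*} {S : Set ι} {f : ι → ℝ}
    (h : ∀ x : ℝ, ∃ i ∈ S, x ≤ f i) : ⨆ i ∈ S, (f i : EReal) = ⊤ := by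
  refine (EReal.eq_top_iff_forall_lt _).2 fun y => ?_
  obtain ⟨i, hi, hyi⟩ := h (y + 1)
  calc (y : EReal) < (y + 1 : ℝ) := by exact_mod_cast lt_add_one y
    _ ≤ f i := by exact_mod_cast hyi
    _ ≤ ⨆ i ∈ S, (f i : EReal) := le_iSup₂_of_le i hi le_rfl

section Perspective

variable {E : Type*} [NormedAddCommGroup E] [InnerProductSpace ℝ E] {q q' : ℝ}

def normRpowPerspective (q m : ℝ) (w : E) : EReal :=
  if 0 < m then ((‖w‖ ^ q / (q * m ^ (q - 1)) : ℝ) : EReal)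
  else if m = 0 ∧ w = 0 then 0 else ⊤

theorem inner_sub_rpow_div_le (hpq : q.HolderConjugate q') (β u : E) :
    ⟪β, u⟫ - ‖β‖ ^ q' / q' ≤ ‖u‖ ^ q / q := by
  have := Real.young_inequality_of_nonneg (norm_nonneg β) (norm_nonneg u) hpq.symm
  linarith [real_inner_le_norm β u]

theorem exists_inner_sub_rpow_div_eq (hpq : q.HolderConjugate q') (u : E) :
    ∃ β : E, ⟪β, u⟫ - ‖β‖ ^ q' / q' = ‖u‖ ^ q / q := by
  have ht := norm_nonneg u
  set t := ‖u‖
  have h_sub_two : t ^ (q - 2) * t = t ^ (q - 1) := by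
    rw [← Real.rpow_add_one' ht (by linarith [hpq.lt])]; ring_nf
  have h_sub_one : t ^ (q - 1) * t = t ^ q := by
    rw [← Real.rpow_add_one' ht (by linarith [hpq.lt])]; ring_nf
  refine ⟨t ^ (q - 2) • u, ?_⟩
  rw [real_inner_smul_left, real_inner_self_eq_norm_sq, norm_smul, Real.norm_of_nonneg
    (Real.rpow_nonneg ht _), h_sub_two, ← Real.rpow_mul ht, hpq.sub_one_mul_conj, pow_two,
    ← mul_assoc, h_sub_two, h_sub_one]
  linear_combination -t ^ q * hpq.inv_add_inv_eq_one

theorem mul_norm_inv_smul_rpow_div {m : ℝ} (hm : 0 < m) (w : E) :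
    m * (‖m⁻¹ • w‖ ^ q / q) = ‖w‖ ^ q / (q * m ^ (q - 1)) := by
  rw [norm_smul, norm_inv, Real.norm_of_nonneg hm.le, Real.mul_rpow (inv_nonneg.2 hm.le)
    (norm_nonneg w), Real.inv_rpow hm.le, Real.rpow_sub_one hm.ne']
  field_simp

theorem mul_add_inner_le (hpq : q.HolderConjugate q') {m : ℝ} (hm : 0 < m) {α : ℝ} {β : E}
    (h : α + ‖β‖ ^ q' / q' ≤ 0) (w : E) :
    α * m + ⟪β, w⟫ ≤ ‖w‖ ^ q / (q * m ^ (q - 1)) := by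
  calc α * m + ⟪β, w⟫ ≤ m * (⟪β, m⁻¹ • w⟫ - ‖β‖ ^ q' / q') := by
        rw [real_inner_smul_right, mul_sub, ← mul_assoc, mul_inv_cancel₀ hm.ne', one_mul]
        linarith [mul_le_mul_of_nonneg_left h hm.le]
    _ ≤ m * (‖m⁻¹ • w‖ ^ q / q) := by gcongr; exact inner_sub_rpow_div_le hpq β _
    _ = ‖w‖ ^ q / (q * m ^ (q - 1)) := mul_norm_inv_smul_rpow_div hm w

theorem normRpowPerspective_eq_biSup (hpq : q.HolderConjugate q') (m : ℝ) (w : E) :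
    normRpowPerspective q m w =
      ⨆ p ∈ {p : ℝ × E | p.1 + ‖p.2‖ ^ q' / q' ≤ 0}, ((p.1 * m + ⟪p.2, w⟫ : ℝ) : EReal) := by
  rcases lt_or_ge 0 m with hm | hm
  · rw [normRpowPerspective, if_pos hm]
    refine le_antisymm ?_
      (iSup₂_le fun p hp => EReal.coe_le_coe_iff.2 (mul_add_inner_le hpq hm hp w))
    obtain ⟨β, hβ⟩ := exists_inner_sub_rpow_div_eq hpq (m⁻¹ • w)
    refine le_iSup₂_of_le (-(‖β‖ ^ q' / q'), β) (by simp) (EReal.coe_le_coe_iff.2 (le_of_eq ?_))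
    rw [← mul_norm_inv_smul_rpow_div hm, ← hβ, real_inner_smul_right]
    field_simp
    ring
  by_cases h0 : m = 0 ∧ w = 0
  · obtain ⟨rfl, rfl⟩ := h0
    have hne : {p : ℝ × E | p.1 + ‖p.2‖ ^ q' / q' ≤ 0}.Nonempty :=
      ⟨0, by simp [Real.zero_rpow hpq.symm.ne_zero]⟩
    rw [normRpowPerspective, if_neg (lt_irrefl 0), if_pos ⟨rfl, rfl⟩]
    simp only [mul_zero, inner_zero_right, add_zero, EReal.coe_zero]
    exact (biSup_const hne).symm
  rw [normRpowPerspective, if_neg hm.not_gt, if_neg h0, eq_comm]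
  refine EReal.biSup_coe_eq_top_of_forall_exists_le fun x => ?_
  rcases hm.lt_or_eq with hm | rfl
  · refine ⟨(|x| / m, 0), ?_, by simp [div_mul_cancel₀ _ hm.ne, le_abs_self]⟩
    simpa [Real.zero_rpow hpq.symm.ne_zero] using
      div_nonpos_of_nonneg_of_nonpos (abs_nonneg x) hm.le
  · have hw : 0 < ‖w‖ ^ 2 := pow_pos (norm_pos_iff.2 (by simpa using h0)) 2
    set β := (|x| / ‖w‖ ^ 2) • w
    refine ⟨(-(‖β‖ ^ q' / q'), β), by simp, ?_⟩
    simp [β, real_inner_smul_left, div_mul_cancel₀ _ hw.ne', le_abs_self]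

end Perspective

theorem convex_epigraph_biSup {ι E : Type*} [AddCommGroup E] [Module ℝ E] {S : Set ι}
    {f : ι → E → ℝ} (hf : ∀ i ∈ S, ConvexOn ℝ Set.univ (f i)) :
    Convex ℝ {x : E × ℝ | ⨆ i ∈ S, (f i x.1 : EReal) ≤ x.2} := by
  have h_inter : {x : E × ℝ | ⨆ i ∈ S, (f i x.1 : EReal) ≤ x.2} =
      ⋂ i ∈ S, {x : E × ℝ | x.1 ∈ Set.univ ∧ f i x.1 ≤ x.2} := by
    ext; simp
  rw [h_inter]
  exact convex_iInter₂ fun i hi => (hf i hi).convex_epigraph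

theorem convexOn_mul_fst_add_sum_mul_snd {ι : Type*} [Fintype ι] (p : ℝ × (ι → ℝ)) :
    ConvexOn ℝ Set.univ (fun x : ℝ × (ι → ℝ) => p.1 * x.1 + ∑ i, p.2 i * x.2 i) := by
  have h : (fun x : ℝ × (ι → ℝ) => p.1 * x.1 + ∑ i, p.2 i * x.2 i) =
      ⇑(p.1 • LinearMap.fst ℝ ℝ (ι → ℝ) +
        ∑ i, p.2 i • (LinearMap.proj i ∘ₗ LinearMap.snd ℝ ℝ (ι → ℝ))) := by
    ext x; simp
  rw [h]
  exact LinearMap.convexOn _ convex_univ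

theorem nrm4_eq_norm (w : Fin 4 → ℝ) : nrm4 w = ‖WithLp.toLp 2 w‖ := by
  simp [nrm4, EuclideanSpace.norm_eq]

theorem sum_mul_eq_inner (β w : Fin 4 → ℝ) :
    ∑ i, β i * w i = ⟪(WithLp.toLp 2 β : EuclideanSpace ℝ (Fin 4)), WithLp.toLp 2 w⟫ := by
  simp [PiLp.inner_apply, mul_comm]

theorem bfun_eq_normRpowPerspective (q m : ℝ) (w : Fin 4 → ℝ) :
    bfun q m w = normRpowPerspective q m (WithLp.toLp 2 w : EuclideanSpace ℝ (Fin 4)) := by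
  simp [bfun, normRpowPerspective, nrm4_eq_norm]

theorem bfun_eq_biSup {q q' : ℝ} (hpq : q.HolderConjugate q') (m : ℝ) (w : Fin 4 → ℝ) :
    bfun q m w = ⨆ p ∈ {p : ℝ × (Fin 4 → ℝ) | p.1 + nrm4 p.2 ^ q' / q' ≤ 0},
      ((p.1 * m + ∑ i, p.2 i * w i : ℝ) : EReal) := by
  rw [bfun_eq_normRpowPerspective, normRpowPerspective_eq_biSup hpq]
  simp only [nrm4_eq_norm, sum_mul_eq_inner]
  exact (((Equiv.refl ℝ).prodCongr (WithLp.equiv 2 (Fin 4 → ℝ))).symm.iSup_comp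
    (g := fun p : ℝ × EuclideanSpace ℝ (Fin 4) => ⨆ (_ : p.1 + ‖p.2‖ ^ q' / q' ≤ 0),
      ((p.1 * m + ⟪p.2, WithLp.toLp 2 w⟫ : ℝ) : EReal))).symm

theorem bfun_ne_bot (q m : ℝ) (w : Fin 4 → ℝ) : bfun q m w ≠ ⊥ := by
  unfold bfun
  split_ifs <;> simp

/-- `b` equals the support function of
`E = {(α,β) : α + |β|^{q'}/q' ≤ 0}`; in particular it is proper, convex
(equivalently, its epigraph is convex) and lower semicontinuous. -/
theorem stmt0 (q q' : ℝ) (hq : 1 < q) (hconj : 1 / q + 1 / q' = 1) :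
    (∀ (m : ℝ) (w : Fin 4 → ℝ),
      bfun q m w =
        ⨆ p ∈ {p : ℝ × (Fin 4 → ℝ) | p.1 + nrm4 p.2 ^ q' / q' ≤ 0},
          ((p.1 * m + ∑ i, p.2 i * w i : ℝ) : EReal))
    ∧ (∀ (m : ℝ) (w : Fin 4 → ℝ), bfun q m w ≠ ⊥)
    ∧ (∃ (m : ℝ) (w : Fin 4 → ℝ), bfun q m w ≠ ⊤)
    ∧ Convex ℝ {p : (ℝ × (Fin 4 → ℝ)) × ℝ | bfun q p.1.1 p.1.2 ≤ (p.2 : EReal)}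
    ∧ LowerSemicontinuous (fun p : ℝ × (Fin 4 → ℝ) => bfun q p.1 p.2) := by
  have hpq : q.HolderConjugate q' :=
    Real.holderConjugate_iff.2 ⟨hq, by simpa only [one_div] using hconj⟩
  have rep := bfun_eq_biSup hpq
  refine ⟨rep, bfun_ne_bot q, ⟨0, 0, by simp [bfun]⟩, ?_, ?_⟩
  · simp only [rep]
    exact convex_epigraph_biSup fun p _ => convexOn_mul_fst_add_sum_mul_snd p
  · simp only [rep]
    exact lowerSemicontinuous_biSup fun p _ =>
      (continuous_coe_real_ereal.comp (by fun_prop)).lowerSemicontinuous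
end
end

section
/- Let K = ℝ₊ × ℝ₋ × ℝ₊ × ℝ₋ ⊂ ℝ^4 and let b be the cost function above. Then the Fenchel conjugate of b̂ = b + ι_{ℝ×K} is the indicator function of the set C = {(α,β) ∈ ℝ × ℝ^4 : α + |P_K β|^{q'}/q' ≤ 0}, where P_K denotes Euclidean projection onto K. -/
open scoped BigOperators Pointwise
open Classical

noncomputable section

/-- The cone `K = ℝ₊ × ℝ₋ × ℝ₊ × ℝ₋`. -/
def Kset : Set (Fin 4 → ℝ) := {w | 0 ≤ w 0 ∧ w 1 ≤ 0 ∧ 0 ≤ w 2 ∧ w 3 ≤ 0}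

/-- Euclidean projection onto `K`, computed componentwise. -/
def PK (w : Fin 4 → ℝ) : Fin 4 → ℝ := ![max (w 0) 0, min (w 1) 0, max (w 2) 0, min (w 3) 0]

/-- `b̂ = b + ι_{ℝ × K}`. -/
def bhat (q : ℝ) (m : ℝ) (w : Fin 4 → ℝ) : EReal :=
  bfun q m w + (if w ∈ Kset then (0 : EReal) else ⊤)

/-! For `m > 0` and `w ∈ K`, projecting onto `K`, Cauchy–Schwarz and the perspective form
of Young's inequality give
`β · w ≤ |P_K β| |w| ≤ m |P_K β|^{q'}/q' + |w|^q/(q m^{q-1})`,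
so the conjugate vanishes on `C`. Off `C`, the equality case of Young's inequality,
`w = m |P_K β|^{q'-2} P_K β`, gives the value `m (α + |P_K β|^{q'}/q') > 0`, which is
unbounded in `m`. -/

section Perspective

variable {q m : ℝ}

lemma mul_rpow_div_perspective (hm : 0 < m) {t : ℝ} (ht : 0 ≤ t) :
    (m * t) ^ q / (q * m ^ (q - 1)) = m * (t ^ q / q) := by
  rw [Real.mul_rpow hm.le ht, Real.rpow_sub_one hm.ne']
  by_cases hq : q = 0
  · simp [hq]
  · field_simp

lemma mul_le_young_perspective {q' a t : ℝ} (hpq : q.HolderConjugate q') (ha : 0 ≤ a)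
    (ht : 0 ≤ t) (hm : 0 < m) :
    a * t ≤ a ^ q' * m / q' + t ^ q / (q * m ^ (q - 1)) := by
  have hyoung := Real.young_inequality_of_nonneg ha (div_nonneg ht hm.le) hpq.symm
  calc a * t = m * (a * (t / m)) := by field_simp
    _ ≤ m * (a ^ q' / q' + (t / m) ^ q / q) := mul_le_mul_of_nonneg_left hyoung hm.le
    _ = a ^ q' * m / q' + (m * (t / m)) ^ q / (q * m ^ (q - 1)) := by
        rw [mul_rpow_div_perspective hm (div_nonneg ht hm.le)]; ring
    _ = a ^ q' * m / q' + t ^ q / (q * m ^ (q - 1)) := by rw [mul_div_cancel₀ t hm.ne']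

end Perspective

lemma nrm4_nonneg (w : Fin 4 → ℝ) : 0 ≤ nrm4 w := Real.sqrt_nonneg _

lemma nrm4_smul {s : ℝ} (hs : 0 ≤ s) (w : Fin 4 → ℝ) :
    nrm4 (fun i => s * w i) = s * nrm4 w := by
  simp only [nrm4, mul_pow, ← Finset.mul_sum]
  rw [Real.sqrt_mul (sq_nonneg s), Real.sqrt_sq hs]

lemma PK_mem (β : Fin 4 → ℝ) : PK β ∈ Kset := by
  simp [PK, Kset]

lemma sum_mul_PK_self (β : Fin 4 → ℝ) : ∑ i, β i * PK β i = nrm4 (PK β) ^ 2 := by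
  have hmax (x : ℝ) : x * max x 0 = max x 0 ^ 2 := by
    rcases le_total x 0 with h | h <;> simp [h, sq]
  have hmin (x : ℝ) : x * min x 0 = min x 0 ^ 2 := by
    rcases le_total x 0 with h | h <;> simp [h, sq]
  rw [nrm4, Real.sq_sqrt (by positivity), Fin.sum_univ_four, Fin.sum_univ_four]
  simp [PK, hmax, hmin]

lemma sum_mul_le_sum_PK_mul (β : Fin 4 → ℝ) {w : Fin 4 → ℝ} (hw : w ∈ Kset) :
    ∑ i, β i * w i ≤ ∑ i, PK β i * w i := by
  obtain ⟨h0, h1, h2, h3⟩ := hw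
  simp only [Fin.sum_univ_four, PK, Matrix.cons_val_zero, Matrix.cons_val_one,
    Matrix.cons_val_two, Matrix.cons_val_three, Matrix.head_cons, Matrix.tail_cons]
  have := mul_le_mul_of_nonneg_right (le_max_left (β 0) 0) h0
  have := mul_le_mul_of_nonpos_right (min_le_left (β 1) 0) h1
  have := mul_le_mul_of_nonneg_right (le_max_left (β 2) 0) h2
  have := mul_le_mul_of_nonpos_right (min_le_left (β 3) 0) h3
  linarith

section Bhat

variable {q m : ℝ} {w : Fin 4 → ℝ}

lemma bhat_of_pos (hm : 0 < m) (hw : w ∈ Kset) :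
    bhat q m w = ((nrm4 w ^ q / (q * m ^ (q - 1)) : ℝ) : EReal) := by
  rw [bhat, bfun, if_pos hm, if_pos hw, add_zero]

lemma bhat_zero_zero (q : ℝ) : bhat q 0 0 = 0 := by
  rw [bhat, bfun, if_neg (lt_irrefl 0), if_pos ⟨rfl, rfl⟩, if_pos (by simp [Kset]), add_zero]

lemma bhat_eq_top_of_not_mem (hw : w ∉ Kset) : bhat q m w = ⊤ := by
  rw [bhat, if_neg hw]
  exact EReal.add_top_of_ne_bot (by unfold bfun; split_ifs <;> simp)

lemma bhat_eq_top_of_not_pos (hm : ¬ 0 < m) (h0 : ¬ (m = 0 ∧ w = 0)) : bhat q m w = ⊤ := by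
  rw [bhat, bfun, if_neg hm, if_neg h0]
  split_ifs <;> simp

end Bhat

section Conjugate

variable {q q' α : ℝ} {β : Fin 4 → ℝ}

lemma pairing_le_cost (hpq : q.HolderConjugate q') (hC : α + nrm4 (PK β) ^ q' / q' ≤ 0)
    {m : ℝ} (hm : 0 < m) {w : Fin 4 → ℝ} (hw : w ∈ Kset) :
    α * m + ∑ i, β i * w i ≤ nrm4 w ^ q / (q * m ^ (q - 1)) := by
  have hproj : ∑ i, β i * w i ≤ nrm4 (PK β) * nrm4 w :=
    (sum_mul_le_sum_PK_mul β hw).trans (Real.sum_mul_le_sqrt_mul_sqrt _ _ _)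
  have hyoung := mul_le_young_perspective hpq (nrm4_nonneg (PK β)) (nrm4_nonneg w) hm
  have hCm : m * (α + nrm4 (PK β) ^ q' / q') ≤ 0 := mul_nonpos_of_nonneg_of_nonpos hm.le hC
  linarith [show m * (α + nrm4 (PK β) ^ q' / q') = α * m + nrm4 (PK β) ^ q' * m / q' by ring]

lemma pairing_sub_bhat_nonpos (hpq : q.HolderConjugate q')
    (hC : α + nrm4 (PK β) ^ q' / q' ≤ 0) (m : ℝ) (w : Fin 4 → ℝ) :
    ((α * m + ∑ i, β i * w i : ℝ) : EReal) - bhat q m w ≤ 0 := by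
  by_cases hw : w ∈ Kset
  · by_cases hm : 0 < m
    · rw [bhat_of_pos hm hw, ← EReal.coe_sub, ← EReal.coe_zero, EReal.coe_le_coe_iff]
      linarith [pairing_le_cost hpq hC hm hw]
    · by_cases h0 : m = 0 ∧ w = 0
      · obtain ⟨rfl, rfl⟩ := h0
        simp [bhat_zero_zero]
      · simp [bhat_eq_top_of_not_pos hm h0]
  · simp [bhat_eq_top_of_not_mem hw]

lemma exists_pairing_sub_bhat_eq (hpq : q.HolderConjugate q') {m : ℝ} (hm : 0 < m) :
    ∃ w : Fin 4 → ℝ, ((α * m + ∑ i, β i * w i : ℝ) : EReal) - bhat q m w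
      = ((m * (α + nrm4 (PK β) ^ q' / q') : ℝ) : EReal) := by
  set a := nrm4 (PK β)
  have ha : 0 ≤ a := nrm4_nonneg _
  have hq' : 1 < q' := hpq.symm.lt
  set s := a ^ (q' - 2)
  have hs : 0 ≤ s := Real.rpow_nonneg ha _
  refine ⟨fun i => m * (s * PK β i), ?_⟩
  have hwK : (fun i => m * (s * PK β i)) ∈ Kset := by
    obtain ⟨h0, h1, h2, h3⟩ := PK_mem β
    exact ⟨by positivity,
      mul_nonpos_of_nonneg_of_nonpos hm.le (mul_nonpos_of_nonneg_of_nonpos hs h1),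
      by positivity,
      mul_nonpos_of_nonneg_of_nonpos hm.le (mul_nonpos_of_nonneg_of_nonpos hs h3)⟩
  have hpair : ∑ i, β i * (m * (s * PK β i)) = m * a ^ q' := by
    have hpow : s * a ^ (2 : ℝ) = a ^ q' := by
      rw [← Real.rpow_add' ha (by linarith)]; ring_nf
    calc ∑ i, β i * (m * (s * PK β i)) = m * (s * ∑ i, β i * PK β i) := by
          rw [Finset.mul_sum, Finset.mul_sum]
          exact Finset.sum_congr rfl fun i _ => by ring
      _ = m * a ^ q' := by
          rw [sum_mul_PK_self, ← hpow, Real.rpow_two]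
  have hnorm : nrm4 (fun i => m * (s * PK β i)) = m * a ^ (q' - 1) := by
    rw [nrm4_smul hm.le, nrm4_smul hs, ← Real.rpow_add_one' ha (by linarith)]
    ring_nf
  have hcost : (a ^ (q' - 1)) ^ q = a ^ q' := by
    rw [← Real.rpow_mul ha]
    congr 1
    linear_combination hpq.mul_eq_add
  rw [bhat_of_pos hm hwK, ← EReal.coe_sub, hpair, hnorm,
    mul_rpow_div_perspective hm (Real.rpow_nonneg ha _), hcost]
  congr 1
  linear_combination (-(m * a ^ q')) * hpq.inv_add_inv_eq_one

end Conjugate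

/-- the Fenchel conjugate of `b̂` is the indicator function of
`C = {(α,β) : α + |P_K β|^{q'}/q' ≤ 0}`. -/
theorem stmt1 (q q' : ℝ) (hq : 1 < q) (hconj : 1 / q + 1 / q' = 1)
    (α : ℝ) (β : Fin 4 → ℝ) :
    (⨆ p : ℝ × (Fin 4 → ℝ),
        (((α * p.1 + ∑ i, β i * p.2 i : ℝ) : EReal) - bhat q p.1 p.2))
      = (if α + nrm4 (PK β) ^ q' / q' ≤ 0 then (0 : EReal) else ⊤) := by
  have hpq : q.HolderConjugate q' :=
    Real.holderConjugate_iff.mpr ⟨hq, by simpa only [one_div] using hconj⟩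
  split_ifs with hC
  · refine le_antisymm (iSup_le fun p => pairing_sub_bhat_nonpos hpq hC p.1 p.2) ?_
    refine le_iSup_of_le ((0 : ℝ), (0 : Fin 4 → ℝ)) ?_
    simp [bhat_zero_zero]
  · set c := α + nrm4 (PK β) ^ q' / q'
    have hc : 0 < c := lt_of_not_ge hC
    rw [EReal.eq_top_iff_forall_lt]
    intro y
    have hm : 0 < (|y| + 1) / c := by positivity
    obtain ⟨w, hw⟩ := exists_pairing_sub_bhat_eq (α := α) (β := β) hpq hm
    refine lt_of_lt_of_le ?_ (le_iSup_of_le ((|y| + 1) / c, w) hw.ge)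
    rw [EReal.coe_lt_coe_iff, div_mul_cancel₀ _ hc.ne']
    linarith [le_abs_self y]
end
end

section
/- With K = ℝ₊ × ℝ₋ × ℝ₊ × ℝ₋, E = {(α,β) : α + |β|^{q'}/q' ≤ 0} and C = {(α,β) : α + |P_K β|^{q'}/q' ≤ 0}, one has C = E + {0} × K⁻, where K⁻ is the polar cone of K. -/
open scoped BigOperators Pointwise
open Classical

noncomputable section

/-- The polar cone `K⁻ = {y : y·c ≤ 0 for all c ∈ K}`. -/
def Kpolar : Set (Fin 4 → ℝ) := {y | ∀ c ∈ Kset, ∑ i, y i * c i ≤ 0}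

/-!
`P_K` clips coordinatewise and `K⁻ = ℝ₋ × ℝ₊ × ℝ₋ × ℝ₊`, so `w = P_K w + (w - P_K w)` splits
a point of `C` into a point `(α, P_K w)` of `E` plus `(0, w - P_K w) ∈ {0} × K⁻`. Conversely,
adding `y ∈ K⁻` to `v` moves every coordinate away from `K`, so clipping `v + y` cannot
increase any `|v i|`; hence `|P_K (v + y)| ≤ |v|`, and `t ↦ t ^ q' / q'` is monotone on `t ≥ 0`.
-/

lemma sq_max_add_le_sq {a b : ℝ} (hb : b ≤ 0) : max (a + b) 0 ^ 2 ≤ a ^ 2 := by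
  rcases le_or_gt (a + b) 0 with h | h
  · rw [max_eq_right h]; simpa using sq_nonneg a
  · rw [max_eq_left h.le]; nlinarith

lemma sq_min_add_le_sq {a b : ℝ} (hb : 0 ≤ b) : min (a + b) 0 ^ 2 ≤ a ^ 2 := by
  rcases le_or_gt 0 (a + b) with h | h
  · rw [min_eq_right h]; simpa using sq_nonneg a
  · rw [min_eq_left h.le]; nlinarith

lemma mem_Kpolar_iff (y : Fin 4 → ℝ) :
    y ∈ Kpolar ↔ y 0 ≤ 0 ∧ 0 ≤ y 1 ∧ y 2 ≤ 0 ∧ 0 ≤ y 3 := by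
  constructor
  · intro h
    refine ⟨?_, ?_, ?_, ?_⟩
    · simpa [Fin.sum_univ_four] using
        h ![1, 0, 0, 0] (by norm_num [Kset, Matrix.cons_val_two, Matrix.cons_val_three])
    · simpa [Fin.sum_univ_four] using
        h ![0, -1, 0, 0] (by norm_num [Kset, Matrix.cons_val_two, Matrix.cons_val_three])
    · simpa [Fin.sum_univ_four] using
        h ![0, 0, 1, 0] (by norm_num [Kset, Matrix.cons_val_two, Matrix.cons_val_three])
    · simpa [Fin.sum_univ_four] using
        h ![0, 0, 0, -1] (by norm_num [Kset, Matrix.cons_val_two, Matrix.cons_val_three])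
  · rintro ⟨h0, h1, h2, h3⟩ c ⟨c0, c1, c2, c3⟩
    rw [Fin.sum_univ_four]
    nlinarith [mul_nonpos_of_nonpos_of_nonneg h0 c0, mul_nonpos_of_nonneg_of_nonpos h1 c1,
      mul_nonpos_of_nonpos_of_nonneg h2 c2, mul_nonpos_of_nonneg_of_nonpos h3 c3]

lemma sub_PK_mem_Kpolar (w : Fin 4 → ℝ) : w - PK w ∈ Kpolar := by
  rw [mem_Kpolar_iff]
  simp [PK]

lemma nrm4_PK_add_le (v : Fin 4 → ℝ) {y : Fin 4 → ℝ} (hy : y ∈ Kpolar) :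
    nrm4 (PK (v + y)) ≤ nrm4 v := by
  obtain ⟨h0, h1, h2, h3⟩ := (mem_Kpolar_iff y).1 hy
  apply Real.sqrt_le_sqrt
  simp only [PK, Pi.add_apply, Fin.sum_univ_four, Matrix.cons_val_zero, Matrix.cons_val_one,
    Matrix.cons_val]
  linarith [sq_max_add_le_sq (a := v 0) h0, sq_min_add_le_sq (a := v 1) h1,
    sq_max_add_le_sq (a := v 2) h2, sq_min_add_le_sq (a := v 3) h3]

/-- `C = E + {0} × K⁻` (Minkowski sum). -/
theorem stmt2 (q' : ℝ) (hq' : 1 < q') :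
    {p : ℝ × (Fin 4 → ℝ) | p.1 + nrm4 (PK p.2) ^ q' / q' ≤ 0}
      = {p : ℝ × (Fin 4 → ℝ) | p.1 + nrm4 p.2 ^ q' / q' ≤ 0}
        + ({0} : Set ℝ) ×ˢ Kpolar := by
  ext ⟨α, w⟩
  constructor
  · intro hC
    exact ⟨(α, PK w), hC, (0, w - PK w), ⟨rfl, sub_PK_mem_Kpolar w⟩, by simp⟩
  · rintro ⟨⟨a, v⟩, hE, ⟨z, y⟩, ⟨rfl : z = 0, hy⟩, hsum⟩
    obtain ⟨rfl, rfl⟩ : a + 0 = α ∧ v + y = w := Prod.ext_iff.1 hsum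
    change a + 0 + nrm4 (PK (v + y)) ^ q' / q' ≤ 0
    have hq'_pos : 0 < q' := by linarith
    calc a + 0 + nrm4 (PK (v + y)) ^ q' / q' ≤ a + nrm4 v ^ q' / q' := by
          rw [add_zero]
          gcongr
          · exact Real.sqrt_nonneg _
          · exact nrm4_PK_add_le v hy
      _ ≤ 0 := hE
end
end

section
/- Let G: ℳ × 𝒲 → ℳ × ℝ be the linear map G(m,w) = (Am + Bw, h² Σ_{i,j} m_{i,j}) on a finite-dimensional space, where A is symmetric with A·𝟏 = 0 and Im(B) = {y : Σ_{i,j} y_{i,j} = 0}. Suppose d ∈ ℳ satisfies d_{i,j} > 0 for all (i,j) and h² Σ_{i,j} d_{i,j} > 1. Then there exists (m̃, w̃) with G(m̃,w̃) = (0,1), w̃_{i,j} in the interior of K = ℝ₊ × ℝ₋ × ℝ₊ × ℝ₋ for all (i,j), and 0 < m̃_{i,j} < d_{i,j} for all (i,j). -/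
open scoped BigOperators
open Classical

noncomputable section

lemma mem_interior_Kset {w : Fin 4 → ℝ} (h0 : 0 < w 0) (h1 : w 1 < 0)
    (h2 : 0 < w 2) (h3 : w 3 < 0) : w ∈ interior Kset := by
  have hU : IsOpen {v : Fin 4 → ℝ | 0 < v 0 ∧ v 1 < 0 ∧ 0 < v 2 ∧ v 3 < 0} := by
    exact ((isOpen_lt continuous_const (continuous_apply 0)).inter
      ((isOpen_lt (continuous_apply 1) continuous_const).inter
      ((isOpen_lt continuous_const (continuous_apply 2)).inter
      (isOpen_lt (continuous_apply 3) continuous_const))))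
  refine interior_maximal ?_ hU ⟨h0, h1, h2, h3⟩
  rintro v ⟨a, b, c, e⟩
  exact ⟨a.le, b.le, c.le, e.le⟩

/-- qualification condition: there exists a feasible `(m̃, w̃)` with
`G(m̃, w̃) = (0,1)`, `w̃` valued in the interior of `K`, and `0 < m̃ < d`. -/
theorem stmt6 (N : ℕ) (hN : 0 < N)
    (A : ((Fin N × Fin N) → ℝ) →ₗ[ℝ] ((Fin N × Fin N) → ℝ))
    (B : ((Fin N × Fin N) → (Fin 4 → ℝ)) →ₗ[ℝ] ((Fin N × Fin N) → ℝ))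
    (hA1 : A (fun _ => 1) = 0)
    (hAsum : ∀ m, ∑ ij, A m ij = 0)
    (hB : (LinearMap.range B : Set ((Fin N × Fin N) → ℝ)) = {y | ∑ ij, y ij = 0})
    (hBconst : ∀ c : Fin 4 → ℝ, B (fun _ => c) = 0)
    (d : (Fin N × Fin N) → ℝ) (hd : ∀ ij, 0 < d ij)
    (hdsum : 1 < (1 / (N : ℝ)) ^ 2 * ∑ ij, d ij) :
    ∃ (m : (Fin N × Fin N) → ℝ) (w : (Fin N × Fin N) → (Fin 4 → ℝ)),
      A m + B w = 0 ∧ (1 / (N : ℝ)) ^ 2 * ∑ ij, m ij = 1 ∧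
      (∀ ij, w ij ∈ interior Kset) ∧ (∀ ij, 0 < m ij ∧ m ij < d ij) := by
  set c : ℝ := (1 / (N : ℝ)) ^ 2 * ∑ ij, d ij with hc
  have hc1 : 1 < c := hdsum
  have hc0 : 0 < c := lt_trans one_pos hc1
  set m : (Fin N × Fin N) → ℝ := fun ij => d ij / c with hm
  -- the negative of A m lies in range B
  have hmem : -(A m) ∈ LinearMap.range B := by
    have : -(A m) ∈ ({y : (Fin N × Fin N) → ℝ | ∑ ij, y ij = 0}) := by
      simp only [Set.mem_setOf_eq, Pi.neg_apply, Finset.sum_neg_distrib, hAsum m, neg_zero]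
    rw [← hB] at this
    exact this
  obtain ⟨w₀, hw₀⟩ := hmem
  set s : ℝ := 1 + ∑ ij, ∑ k, |w₀ ij k| with hs
  have habs : ∀ ij k, |w₀ ij k| < s := by
    intro ij k
    have h1 : |w₀ ij k| ≤ ∑ k, |w₀ ij k| :=
      Finset.single_le_sum (f := fun k => |w₀ ij k|) (fun i _ => abs_nonneg _)
        (Finset.mem_univ k)
    have h2 : ∑ k, |w₀ ij k| ≤ ∑ ij, ∑ k, |w₀ ij k| :=
      Finset.single_le_sum (f := fun ij => ∑ k, |w₀ ij k|)
        (fun i _ => Finset.sum_nonneg fun _ _ => abs_nonneg _) (Finset.mem_univ ij)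
    linarith
  set cv : Fin 4 → ℝ := ![s, -s, s, -s] with hcv
  refine ⟨m, w₀ + fun _ => cv, ?_, ?_, ?_, ?_⟩
  · rw [map_add, hBconst, add_zero, hw₀]
    ring
  · rw [hm]
    have hsum : ∑ ij, d ij / c = (∑ ij, d ij) / c := by
      rw [Finset.sum_div]
    rw [hsum]
    have : Nonempty (Fin N × Fin N) := ⟨(⟨0, hN⟩, ⟨0, hN⟩)⟩
    have hdpos : 0 < ∑ ij, d ij := Finset.sum_pos (fun ij _ => hd ij)
      Finset.univ_nonempty
    rw [hc]
    field_simp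
  · intro ij
    have h0 := habs ij 0
    have h1 := habs ij 1
    have h2 := habs ij 2
    have h3 := habs ij 3
    obtain ⟨a0, b0⟩ := abs_lt.mp h0
    obtain ⟨a1, b1⟩ := abs_lt.mp h1
    obtain ⟨a2, b2⟩ := abs_lt.mp h2
    obtain ⟨a3, b3⟩ := abs_lt.mp h3
    refine mem_interior_Kset ?_ ?_ ?_ ?_ <;>
      simp only [Pi.add_apply, hcv] <;>
      simp [Matrix.cons_val_zero, Matrix.cons_val_one] <;>
      linarith
  · intro ij
    constructor
    · exact div_pos (hd ij) hc0
    · rw [hm]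
      exact div_lt_self (hd ij) hc1
end
end

section
/- Suppose ν > 0. Any solution (m,w) of the discrete constrained minimization problem (P_h) satisfies m_{i,j} > 0 for all (i,j). More precisely: if m, w satisfy m ≥ 0, w_{i,j} ∈ K for all (i,j), w_{i,j} = 0 whenever m_{i,j} = 0, the stationary discrete Fokker–Planck constraint −ν(Δ_h m)_{i,j} + (Bw)_{i,j} = 0, and h² Σ m_{i,j} = 1, then m_{i,j} > 0 for all (i,j). -/
/-! The zero set of `m` is invariant under the four lattice shifts, because at a zero of `m` the
equation says `ν (Σ neighbours of m) / h² = (Bw) / h`, where the left side is `≥ 0` and, by the sign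
structure of `K` and `w = 0` at the zero, the right side is `≤ 0`. Since the discrete torus is
connected, `m` would then vanish identically, against `h² Σ m = 1`. -/

open scoped BigOperators
open Classical

noncomputable section

namespace ZMod

theorem forall_of_imp_add_one {N : ℕ} [NeZero N] {P : ZMod N → Prop}
    (hP : ∀ a, P a → P (a + 1)) {a₀ : ZMod N} (h₀ : P a₀) (a : ZMod N) : P a := by
  have hshift : ∀ n : ℕ, P (a₀ + n) := by
    intro n
    induction n with
    | zero => simpa using h₀
    | succ n ih => simpa [add_assoc] using hP _ ih
  simpa using hshift (a - a₀).val

theorem prod_forall_of_imp_add_one {N : ℕ} [NeZero N] {P : ZMod N × ZMod N → Prop}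
    (hP₁ : ∀ i j, P (i, j) → P (i + 1, j)) (hP₂ : ∀ i j, P (i, j) → P (i, j + 1))
    {p₀ : ZMod N × ZMod N} (h₀ : P p₀) (p : ZMod N × ZMod N) : P p :=
  forall_of_imp_add_one (P := fun j => P (p.1, j)) (hP₂ p.1)
    (forall_of_imp_add_one (P := fun i => P (i, p₀.2)) (fun i => hP₁ i p₀.2) h₀ p.1) p.2

end ZMod

theorem eq_zero_of_neg_mul_div_sq_add_div_eq_zero {ν h S T : ℝ} (hν : 0 < ν) (hh : 0 < h)
    (hS : 0 ≤ S) (hT : T ≤ 0) (e : -ν * (S / h ^ 2) + T / h = 0) : S = 0 := by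
  have hνS : ν * S = T * h := by
    field_simp at e
    linarith
  nlinarith [mul_nonpos_of_nonpos_of_nonneg hT hh.le, mul_nonneg hν.le hS]

theorem neighbors_eq_zero_of_eq_zero {G : Type*} [AddGroupWithOne G] {ν h : ℝ}
    (hν : 0 < ν) (hh : 0 < h) {m : G × G → ℝ} {w : G × G → (Fin 4 → ℝ)}
    (hm : ∀ p, 0 ≤ m p) (hw : ∀ p, w p ∈ Kset) (hmw : ∀ p, m p = 0 → w p = 0) {i j : G}
    (heq : -ν * ((m (i + 1, j) + m (i - 1, j) + m (i, j + 1) + m (i, j - 1) - 4 * m (i, j)) / h ^ 2)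
        + ((w (i, j) 0 - w (i - 1, j) 0) + (w (i + 1, j) 1 - w (i, j) 1)
            + (w (i, j) 2 - w (i, j - 1) 2) + (w (i, j + 1) 3 - w (i, j) 3)) / h = 0)
    (h₀ : m (i, j) = 0) :
    m (i + 1, j) = 0 ∧ m (i - 1, j) = 0 ∧ m (i, j + 1) = 0 ∧ m (i, j - 1) = 0 := by
  rw [h₀, hmw _ h₀] at heq
  simp only [Pi.zero_apply, mul_zero, sub_zero, zero_sub] at heq
  obtain ⟨hl, -, -, -⟩ := hw (i - 1, j)
  obtain ⟨-, hr, -, -⟩ := hw (i + 1, j)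
  obtain ⟨-, -, hd, -⟩ := hw (i, j - 1)
  obtain ⟨-, -, -, hu⟩ := hw (i, j + 1)
  have hsum := eq_zero_of_neg_mul_div_sq_add_div_eq_zero hν hh
    (by linarith [hm (i + 1, j), hm (i - 1, j), hm (i, j + 1), hm (i, j - 1)])
    (by linarith) heq
  refine ⟨?_, ?_, ?_, ?_⟩ <;>
    linarith [hm (i + 1, j), hm (i - 1, j), hm (i, j + 1), hm (i, j - 1)]

/-- for `ν > 0`, if `m ≥ 0`, `w` takes values in `K`, `w` vanishes
where `m` vanishes, `(m,w)` satisfies the stationary discrete Fokker–Planck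
equation `−ν Δ_h m + B w = 0` on the discrete torus, and `h² Σ m = 1`, then
`m > 0` everywhere. -/
theorem stmt8 (N : ℕ) [NeZero N] (ν h : ℝ) (hν : 0 < ν) (hh : h = 1 / N)
    (m : ZMod N × ZMod N → ℝ) (w : ZMod N × ZMod N → (Fin 4 → ℝ))
    (hm : ∀ p, 0 ≤ m p)
    (hw : ∀ p, w p ∈ Kset)
    (hmw : ∀ p, m p = 0 → w p = 0)
    (heq : ∀ i j : ZMod N,
      -ν * ((m (i + 1, j) + m (i - 1, j) + m (i, j + 1) + m (i, j - 1) - 4 * m (i, j)) / h ^ 2)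
        + ((w (i, j) 0 - w (i - 1, j) 0) + (w (i + 1, j) 1 - w (i, j) 1)
            + (w (i, j) 2 - w (i, j - 1) 2) + (w (i, j + 1) 3 - w (i, j) 3)) / h = 0)
    (hmass : h ^ 2 * ∑ p, m p = 1) :
    ∀ p, 0 < m p := by
  have hh₀ : 0 < h := hh ▸ one_div_pos.mpr (Nat.cast_pos.mpr (NeZero.pos N))
  by_contra! hneg
  obtain ⟨p₀, hp₀⟩ := hneg
  have hzero : ∀ p, m p = 0 :=
    ZMod.prod_forall_of_imp_add_one (P := fun p => m p = 0)
      (fun i j h₀ => (neighbors_eq_zero_of_eq_zero hν hh₀ hm hw hmw (heq i j) h₀).1)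
      (fun i j h₀ => (neighbors_eq_zero_of_eq_zero hν hh₀ hm hw hmw (heq i j) h₀).2.2.1)
      (le_antisymm hp₀ (hm p₀))
  simp [hzero] at hmass
end
end
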